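/- Let n1,n2,n3,n4,α0,α1,α2,α3,α4 ∈ ℂ with each n_i ≠ 0, 1/n1+1/n2+1/n3+1/n4 = 2 and δ ≠ 0. Let U ⊆ ℂ be open with 0,1 ∉ U, and let x, y : ℂ → ℂ be differentiable on U satisfying the generalized Painlevé VI system with parameters (n1,n2,n3,n4; α0,α1,α2,α3,α4) on U. Then the functions x̃(t) := (T − x(T))/(T−1) and ỹ(t) := −(T−1)·y(T), where T := t/(t−1), satisfy the generalized Painlevé VI system on the set {t : t ≠ 1 and t/(t−1) ∈ U} with parameters (n3,n2,n1,n4; α4,α1,α2,α3,α0), provided the quantity δ formed from these new parameters is nonzero. -/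

import Mathlib

/-- The constant `δ` of the generalized Painlevé VI system. -/
noncomputable def pviDelta (n1 n2 n3 b0 b1 b2 b3 b4 : ℂ) : ℂ :=
  n1 * n2 * b0 + (2 * n1 * n2 * n3 - n1 * n2 - n1 * n3 - n2 * n3) * b1
    - n1 * n2 * n3 * b2 + n1 * n3 * b3 + n2 * n3 * b4

/-- `x, y : ℂ → ℂ` are differentiable on `U` and satisfy the generalized
Painlevé VI system with parameters `(n1,n2,n3,n4; b0,b1,b2,b3,b4)` on `U`. -/
def PVISystem (n1 n2 n3 n4 b0 b1 b2 b3 b4 : ℂ) (U : Set ℂ) (x y : ℂ → ℂ) : Prop :=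
  DifferentiableOn ℂ x U ∧ DifferentiableOn ℂ y U ∧
  ∀ t ∈ U,
    (pviDelta n1 n2 n3 b0 b1 b2 b3 b4 * (t * (t - 1)) * deriv x t =
      n1 * n2 * n3 * x t * (x t - 1) * (t - x t) * y t
      + ((2 * n1 * n2 * n3 - n1 * n2 - n1 * n3 - n2 * n3) * b1 - n1 * n2 * n3 * b2) * (x t) ^ 2
      + (-(2 * n1 * n2 * n3 - n1 * n2 - n1 * n3 - n2 * n3) * b1 + n1 * n2 * n3 * b2
          + n1 * n3 * b3 * (t - 1) + n2 * n3 * b4 * t) * x t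
      - n2 * n3 * b4 * t)
    ∧
    (pviDelta n1 n2 n3 b0 b1 b2 b3 b4 * (t * (t - 1)) * deriv y t =
      ((n1 * n2 + n2 * n3 + n1 * n3) * (x t) ^ 2
          - (n1 * n2 + n2 * n3 + (n1 + n2) * n3 * t) * x t + n2 * n3 * t) * (y t) ^ 2
      + (-(2 * (2 * n1 * n2 * n3 - n1 * n2 - n1 * n3 - n2 * n3) * b1
            + (-2 * n1 * n2 - 2 * n1 * n3 - 2 * n2 * n3 + n1 * n2 * n3) * b2) * x t
          + (-(n1 * n2) - n1 * n3 - n2 * n3 + 2 * n1 * n2 * n3) * b1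
          + ((n1 * n2 - n1 - n2) * n3 * t - n1 * n2 - n2 * n3) * b2
          - n1 * n3 * b3 * (t - 1) - n2 * n3 * b4 * t) * y t
      - b2 * ((-(n1 * n2) - n1 * n3 - n2 * n3 + 2 * n1 * n2 * n3) * b1
          + (-(n1 * n2) - n1 * n3 - n2 * n3 + n1 * n2 * n3) * b2))

/-!
With `T = t/(t-1)` one has `T - 1 = 1/(t-1)` and `dT/dt = -1/(t-1)²`, so `x̃ = t - (t-1)·x(T)` and
`ỹ = -y(T)/(t-1)`. The swap `(n1, α0) ↔ (n3, α4)` leaves `δ` unchanged, and after the chain rule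
the system for `(x̃, ỹ)` at `t` is the system for `(x, y)` at `T` multiplied by a power of `t - 1`:
a polynomial identity, checked pointwise.
-/

def PVIEquations (n1 n2 n3 b0 b1 b2 b3 b4 t X Y X' Y' : ℂ) : Prop :=
  (pviDelta n1 n2 n3 b0 b1 b2 b3 b4 * (t * (t - 1)) * X' =
      n1 * n2 * n3 * X * (X - 1) * (t - X) * Y
      + ((2 * n1 * n2 * n3 - n1 * n2 - n1 * n3 - n2 * n3) * b1 - n1 * n2 * n3 * b2) * X ^ 2
      + (-(2 * n1 * n2 * n3 - n1 * n2 - n1 * n3 - n2 * n3) * b1 + n1 * n2 * n3 * b2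
          + n1 * n3 * b3 * (t - 1) + n2 * n3 * b4 * t) * X
      - n2 * n3 * b4 * t)
    ∧
    (pviDelta n1 n2 n3 b0 b1 b2 b3 b4 * (t * (t - 1)) * Y' =
      ((n1 * n2 + n2 * n3 + n1 * n3) * X ^ 2
          - (n1 * n2 + n2 * n3 + (n1 + n2) * n3 * t) * X + n2 * n3 * t) * Y ^ 2
      + (-(2 * (2 * n1 * n2 * n3 - n1 * n2 - n1 * n3 - n2 * n3) * b1
            + (-2 * n1 * n2 - 2 * n1 * n3 - 2 * n2 * n3 + n1 * n2 * n3) * b2) * X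
          + (-(n1 * n2) - n1 * n3 - n2 * n3 + 2 * n1 * n2 * n3) * b1
          + ((n1 * n2 - n1 - n2) * n3 * t - n1 * n2 - n2 * n3) * b2
          - n1 * n3 * b3 * (t - 1) - n2 * n3 * b4 * t) * Y
      - b2 * ((-(n1 * n2) - n1 * n3 - n2 * n3 + 2 * n1 * n2 * n3) * b1
          + (-(n1 * n2) - n1 * n3 - n2 * n3 + n1 * n2 * n3) * b2))

theorem pviSystem_iff {n1 n2 n3 n4 b0 b1 b2 b3 b4 : ℂ} {U : Set ℂ} {x y : ℂ → ℂ} :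
    PVISystem n1 n2 n3 n4 b0 b1 b2 b3 b4 U x y ↔
      DifferentiableOn ℂ x U ∧ DifferentiableOn ℂ y U ∧
        ∀ t ∈ U, PVIEquations n1 n2 n3 b0 b1 b2 b3 b4 t (x t) (y t) (deriv x t) (deriv y t) :=
  Iff.rfl

theorem PVIEquations.pi2 {n1 n2 n3 a0 a1 a2 a3 a4 t X Y X' Y' : ℂ} (ht : t ≠ 1)
    (h : PVIEquations n1 n2 n3 a0 a1 a2 a3 a4 (t / (t - 1)) X Y X' Y') :
    PVIEquations n3 n2 n1 a4 a1 a2 a3 a0 t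
      ((t / (t - 1) - X) / (t / (t - 1) - 1)) (-(t / (t - 1) - 1) * Y)
      (1 - X + X' / (t - 1)) (Y' / (t - 1) ^ 3 + Y / (t - 1) ^ 2) := by
  have hu : t - 1 ≠ 0 := sub_ne_zero.mpr ht
  obtain ⟨hX, hY⟩ := h
  unfold PVIEquations pviDelta at *
  rw [div_sub_one hu] at hX hY ⊢
  constructor
  · linear_combination (norm := (field_simp; ring1)) (t - 1) ^ 2 * hX
  · linear_combination (norm := (field_simp; ring1)) hY

section Pi2

variable {𝕜 : Type*} [NontriviallyNormedField 𝕜]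

def pi2X (x : 𝕜 → 𝕜) (t : 𝕜) : 𝕜 :=
  (t / (t - 1) - x (t / (t - 1))) / (t / (t - 1) - 1)

def pi2Y (y : 𝕜 → 𝕜) (t : 𝕜) : 𝕜 :=
  -(t / (t - 1) - 1) * y (t / (t - 1))

theorem hasDerivAt_div_sub_one {t : 𝕜} (ht : t ≠ 1) :
    HasDerivAt (fun τ => τ / (τ - 1)) (-((t - 1) ^ 2)⁻¹) t := by
  have hu : t - 1 ≠ 0 := sub_ne_zero.mpr ht
  refine ((hasDerivAt_id' t).div ((hasDerivAt_id' t).sub_const 1) hu).congr_deriv ?_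
  ring

theorem hasDerivAt_pi2X {x : 𝕜 → 𝕜} {x' t : 𝕜} (ht : t ≠ 1)
    (hx : HasDerivAt x x' (t / (t - 1))) :
    HasDerivAt (pi2X x) (1 - x (t / (t - 1)) + x' / (t - 1)) t := by
  have hu : t - 1 ≠ 0 := sub_ne_zero.mpr ht
  have hT := hasDerivAt_div_sub_one ht
  have hne : t / (t - 1) - 1 ≠ 0 := by simp [div_sub_one hu, hu]
  refine ((hT.sub (hx.comp t hT)).div (hT.sub_const 1) hne).congr_deriv ?_
  simp only [Pi.sub_apply, Function.comp_apply, div_sub_one hu]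
  field_simp
  ring

theorem hasDerivAt_pi2Y {y : 𝕜 → 𝕜} {y' t : 𝕜} (ht : t ≠ 1)
    (hy : HasDerivAt y y' (t / (t - 1))) :
    HasDerivAt (pi2Y y) (y' / (t - 1) ^ 3 + y (t / (t - 1)) / (t - 1) ^ 2) t := by
  have hu : t - 1 ≠ 0 := sub_ne_zero.mpr ht
  have hT := hasDerivAt_div_sub_one ht
  refine ((hT.sub_const 1).neg.mul (hy.comp t hT)).congr_deriv ?_
  simp only [Pi.neg_apply, Function.comp_apply, div_sub_one hu]
  field_simp
  ring

end Pi2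

theorem pvi_symmetry_pi2_general (n1 n2 n3 n4 a0 a1 a2 a3 a4 : ℂ)
    (U : Set ℂ) (hU : IsOpen U)
    (x y : ℂ → ℂ)
    (hxy : PVISystem n1 n2 n3 n4 a0 a1 a2 a3 a4 U x y) :
    PVISystem n3 n2 n1 n4 a4 a1 a2 a3 a0 {t : ℂ | t ≠ 1 ∧ t / (t - 1) ∈ U}
      (fun t => (t / (t - 1) - x (t / (t - 1))) / (t / (t - 1) - 1))
      (fun t => -(t / (t - 1) - 1) * y (t / (t - 1))) := by
  change PVISystem _ _ _ _ _ _ _ _ _ _ (pi2X x) (pi2Y y)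
  obtain ⟨hxd, hyd, hxy⟩ := pviSystem_iff.mp hxy
  have hx : ∀ t ∈ {t : ℂ | t ≠ 1 ∧ t / (t - 1) ∈ U}, HasDerivAt (pi2X x)
      (1 - x (t / (t - 1)) + deriv x (t / (t - 1)) / (t - 1)) t := fun t ⟨ht, hT⟩ =>
    hasDerivAt_pi2X ht ((hxd _ hT).differentiableAt (hU.mem_nhds hT)).hasDerivAt
  have hy : ∀ t ∈ {t : ℂ | t ≠ 1 ∧ t / (t - 1) ∈ U}, HasDerivAt (pi2Y y)
      (deriv y (t / (t - 1)) / (t - 1) ^ 3 + y (t / (t - 1)) / (t - 1) ^ 2) t := fun t ⟨ht, hT⟩ =>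
    hasDerivAt_pi2Y ht ((hyd _ hT).differentiableAt (hU.mem_nhds hT)).hasDerivAt
  refine pviSystem_iff.mpr ⟨fun t ht => (hx t ht).differentiableAt.differentiableWithinAt,
    fun t ht => (hy t ht).differentiableAt.differentiableWithinAt, fun t ht => ?_⟩
  rw [(hx t ht).deriv, (hy t ht).deriv]
  exact (hxy _ ht.2).pi2 ht.1

/-- Birational symmetry `π₂` of the generalized Painlevé VI system:
with `T = t/(t−1)`, `x̃(t) = (T − x(T))/(T−1)`, `ỹ(t) = −(T−1)·y(T)`,
with parameters `(n3,n2,n1,n4; α4,α1,α2,α3,α0)`. -/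
theorem pvi_symmetry_pi2 (n1 n2 n3 n4 a0 a1 a2 a3 a4 : ℂ)
    (hn1 : n1 ≠ 0) (hn2 : n2 ≠ 0) (hn3 : n3 ≠ 0) (hn4 : n4 ≠ 0)
    (hsum : 1 / n1 + 1 / n2 + 1 / n3 + 1 / n4 = 2)
    (hδ : pviDelta n1 n2 n3 a0 a1 a2 a3 a4 ≠ 0)
    (U : Set ℂ) (hU : IsOpen U) (h0U : (0 : ℂ) ∉ U) (h1U : (1 : ℂ) ∉ U)
    (x y : ℂ → ℂ)
    (hxy : PVISystem n1 n2 n3 n4 a0 a1 a2 a3 a4 U x y)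
    (hδ' : pviDelta n3 n2 n1 a4 a1 a2 a3 a0 ≠ 0) :
    PVISystem n3 n2 n1 n4 a4 a1 a2 a3 a0 {t : ℂ | t ≠ 1 ∧ t / (t - 1) ∈ U}
      (fun t => (t / (t - 1) - x (t / (t - 1))) / (t / (t - 1) - 1))
      (fun t => -(t / (t - 1) - 1) * y (t / (t - 1))) :=
  pvi_symmetry_pi2_general n1 n2 n3 n4 a0 a1 a2 a3 a4 U hU x y hxy
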